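/- Let D₀ = D₁ ×_e D₂ where D₁ and D₂ are open domains in ℂ(i₁), and let (F, G) be an i₂e-generating pair on D₀. If w is (F,G)_j-pseudoanalytic on D₀, then w can be decomposed as w(z₁ + z₂i₂) = w_{e1}(z₁ − z₂i₁)e₁ + w_{e2}(z₁ + z₂i₁)e₂ for all z₁ + z₂i₂ ∈ D₀, for some functions w_{e1} : D₁ → ℂ(i₁) and w_{e2} : D₂ → ℂ(i₁). -/

import Mathlib

noncomputable section

open Complex Filter Topology

/-- The bicomplex numbers `𝕋 = {z₁ + z₂ i₂ : z₁, z₂ ∈ ℂ(i₁)}`, represented by the pair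
of `ℂ(i₁)`-components `(z₁, z₂)`. -/
@[ext] structure Bicomplex : Type where
  z1 : ℂ
  z2 : ℂ

namespace Bicomplex

instance : Zero Bicomplex := ⟨⟨0, 0⟩⟩
instance : One Bicomplex := ⟨⟨1, 0⟩⟩
instance : Add Bicomplex := ⟨fun w v => ⟨w.z1 + v.z1, w.z2 + v.z2⟩⟩
instance : Neg Bicomplex := ⟨fun w => ⟨-w.z1, -w.z2⟩⟩
instance : Mul Bicomplex := ⟨fun w v => ⟨w.z1 * v.z1 - w.z2 * v.z2, w.z1 * v.z2 + w.z2 * v.z1⟩⟩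

@[simp] lemma zero_z1 : (0 : Bicomplex).z1 = 0 := rfl
@[simp] lemma zero_z2 : (0 : Bicomplex).z2 = 0 := rfl
@[simp] lemma one_z1 : (1 : Bicomplex).z1 = 1 := rfl
@[simp] lemma one_z2 : (1 : Bicomplex).z2 = 0 := rfl
@[simp] lemma add_z1 (w v : Bicomplex) : (w + v).z1 = w.z1 + v.z1 := rfl
@[simp] lemma add_z2 (w v : Bicomplex) : (w + v).z2 = w.z2 + v.z2 := rfl
@[simp] lemma neg_z1 (w : Bicomplex) : (-w).z1 = -w.z1 := rfl
@[simp] lemma neg_z2 (w : Bicomplex) : (-w).z2 = -w.z2 := rfl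
@[simp] lemma mul_z1 (w v : Bicomplex) : (w * v).z1 = w.z1 * v.z1 - w.z2 * v.z2 := rfl
@[simp] lemma mul_z2 (w v : Bicomplex) : (w * v).z2 = w.z1 * v.z2 + w.z2 * v.z1 := rfl

/-- The bicomplex numbers form a commutative ring. -/
instance : CommRing Bicomplex where
  nsmul n w := ⟨n • w.z1, n • w.z2⟩
  zsmul n w := ⟨n • w.z1, n • w.z2⟩
  nsmul_zero a := by ext <;> exact zero_nsmul _
  nsmul_succ n a := by ext <;> exact succ_nsmul _ _
  zsmul_zero' a := by ext <;> exact zero_zsmul _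
  zsmul_succ' n a := by ext <;> exact SubNegMonoid.zsmul_succ' _ _
  zsmul_neg' n a := by ext <;> exact SubNegMonoid.zsmul_neg' _ _
  add_assoc a b c := by ext <;> simp <;> ring
  zero_add a := by ext <;> simp
  add_zero a := by ext <;> simp
  add_comm a b := by ext <;> simp <;> ring
  neg_add_cancel a := by ext <;> simp
  mul_assoc a b c := by ext <;> simp <;> ring
  one_mul a := by ext <;> simp
  mul_one a := by ext <;> simp
  left_distrib a b c := by ext <;> simp <;> ring
  right_distrib a b c := by ext <;> simp <;> ring
  zero_mul a := by ext <;> simp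
  mul_zero a := by ext <;> simp
  mul_comm a b := by ext <;> simp <;> ring

/-- Inverse: `w⁻¹ = w†₂ / (z₁² + z₂²)` (junk value `0/0` on the null-cone). -/
instance : Inv Bicomplex :=
  ⟨fun w => ⟨w.z1 / (w.z1 ^ 2 + w.z2 ^ 2), -w.z2 / (w.z1 ^ 2 + w.z2 ^ 2)⟩⟩

instance : Div Bicomplex := ⟨fun w v => w * v⁻¹⟩

/-- Embedding of `ℂ(i₁)` into `𝕋`. -/
def ofComplex (c : ℂ) : Bicomplex := ⟨c, 0⟩

/-- Embedding of `ℝ` into `𝕋`. -/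
def ofReal (t : ℝ) : Bicomplex := ⟨(t : ℂ), 0⟩

/-- The imaginary unit `i₁`. -/
def i1 : Bicomplex := ⟨Complex.I, 0⟩

/-- The imaginary unit `i₂`. -/
def i2 : Bicomplex := ⟨0, 1⟩

/-- The hyperbolic unit `j = i₁ i₂`. -/
def jj : Bicomplex := ⟨0, Complex.I⟩

/-- The idempotent `e₁ = (1 + j)/2`. -/
def e1 : Bicomplex := ⟨1 / 2, Complex.I / 2⟩

/-- The idempotent `e₂ = (1 - j)/2`. -/
def e2 : Bicomplex := ⟨1 / 2, -(Complex.I) / 2⟩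

/-- The projection `P₁(z₁ + z₂ i₂) = z₁ - z₂ i₁`. -/
def P1 (w : Bicomplex) : ℂ := w.z1 - w.z2 * Complex.I

/-- The projection `P₂(z₁ + z₂ i₂) = z₁ + z₂ i₁`. -/
def P2 (w : Bicomplex) : ℂ := w.z1 + w.z2 * Complex.I

/-- The conjugation `w†₁ = z̄₁ + z̄₂ i₂`. -/
def dag1 (w : Bicomplex) : Bicomplex := ⟨(starRingEnd ℂ) w.z1, (starRingEnd ℂ) w.z2⟩

/-- The conjugation `w†₂ = z₁ - z₂ i₂`. -/
def dag2 (w : Bicomplex) : Bicomplex := ⟨w.z1, -w.z2⟩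

/-- The conjugation `w†₃ = z̄₁ - z̄₂ i₂`. -/
def dag3 (w : Bicomplex) : Bicomplex := ⟨(starRingEnd ℂ) w.z1, -((starRingEnd ℂ) w.z2)⟩

/-- `𝕋` as `ℂ × ℂ`. -/
def toProd (w : Bicomplex) : ℂ × ℂ := (w.z1, w.z2)

/-- `ℂ × ℂ` as `𝕋`. -/
def ofProd (p : ℂ × ℂ) : Bicomplex := ⟨p.1, p.2⟩

instance : TopologicalSpace Bicomplex := TopologicalSpace.induced toProd inferInstance

/-- The set of points `w` such that `w - w₀` is invertible (i.e. not a zero divisor). -/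
def invertibleDiff (w₀ : Bicomplex) : Set Bicomplex :=
  {w | (w - w₀).z1 ^ 2 + (w - w₀).z2 ^ 2 ≠ 0}

/-- `f` is `𝕋`-differentiable at `w₀` with derivative `d`:
`(f w - f w₀)/(w - w₀) → d` as `w → w₀` with `w - w₀` invertible. -/
def HasTDerivAt (f : Bicomplex → Bicomplex) (d w₀ : Bicomplex) : Prop :=
  Tendsto (fun w => (f w - f w₀) / (w - w₀)) (𝓝[invertibleDiff w₀] w₀) (𝓝 d)

/-- `f` is `𝕋`-holomorphic on `U` if it is `𝕋`-differentiable at each point of `U`. -/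
def THolomorphicOn (f : Bicomplex → Bicomplex) (U : Set Bicomplex) : Prop :=
  ∀ w ∈ U, ∃ d, HasTDerivAt f d w

/-- `f` viewed as a map `ℂ² → ℂ²`. -/
def fProd (f : Bicomplex → Bicomplex) : ℂ × ℂ → ℂ × ℂ := fun p => toProd (f (ofProd p))

/-- `f : 𝕋 → 𝕋` is `n` times continuously (real-)differentiable on `U`. -/
def TContDiffOn (n : ℕ∞) (f : Bicomplex → Bicomplex) (U : Set Bicomplex) : Prop :=
  ContDiffOn ℝ n (fProd f) (toProd '' U)

/-- `g : 𝕋 → ℂ` is `n` times continuously (real-)differentiable on `U`. -/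
def CContDiffOn (n : ℕ∞) (g : Bicomplex → ℂ) (U : Set Bicomplex) : Prop :=
  ContDiffOn ℝ n (fun p => g (ofProd p)) (toProd '' U)

/-- Real partial derivative of `g : 𝕋 → ℂ` at `w` in direction `e`. -/
def pd (e : Bicomplex) (g : Bicomplex → ℂ) (w : Bicomplex) : ℂ :=
  deriv (fun t : ℝ => g (w + ofReal t * e)) 0

/-- Existence of the real partial derivative of `g : 𝕋 → ℂ` at `w` in direction `e`. -/
def pdExists (e : Bicomplex) (g : Bicomplex → ℂ) (w : Bicomplex) : Prop :=
  DifferentiableAt ℝ (fun t : ℝ => g (w + ofReal t * e)) 0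

/-- The scalar (`ℂ(i₁)`-) component `f₁` of `f = f₁ + f₂ i₂`. -/
def s1 (f : Bicomplex → Bicomplex) : Bicomplex → ℂ := fun w => (f w).z1

/-- The vectorial (`ℂ(i₁)`-) component `f₂` of `f = f₁ + f₂ i₂`. -/
def s2 (f : Bicomplex → Bicomplex) : Bicomplex → ℂ := fun w => (f w).z2

/-- Real partial derivative of `f : 𝕋 → 𝕋` in direction `e`. -/
def pdT (e : Bicomplex) (f : Bicomplex → Bicomplex) : Bicomplex → Bicomplex :=
  fun w => ⟨pd e (s1 f) w, pd e (s2 f) w⟩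

/-- Existence of the real partial derivative of `f : 𝕋 → 𝕋` in direction `e`. -/
def pdTExists (e : Bicomplex) (f : Bicomplex → Bicomplex) (w : Bicomplex) : Prop :=
  pdExists e (s1 f) w ∧ pdExists e (s2 f) w

/-- `∂_{z₁} g = ½(∂ₓ g - i₁ ∂_y g)` for `g : 𝕋 → ℂ`. -/
def dz1 (g : Bicomplex → ℂ) : Bicomplex → ℂ :=
  fun w => (pd 1 g w - Complex.I * pd i1 g w) / 2

/-- `∂_{z̄₁} g = ½(∂ₓ g + i₁ ∂_y g)` for `g : 𝕋 → ℂ`. -/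
def dz1bar (g : Bicomplex → ℂ) : Bicomplex → ℂ :=
  fun w => (pd 1 g w + Complex.I * pd i1 g w) / 2

/-- `∂_{z₂} g = ½(∂_p g - i₁ ∂_q g)` for `g : 𝕋 → ℂ`. -/
def dz2 (g : Bicomplex → ℂ) : Bicomplex → ℂ :=
  fun w => (pd i2 g w - Complex.I * pd jj g w) / 2

/-- `∂_{z̄₂} g = ½(∂_p g + i₁ ∂_q g)` for `g : 𝕋 → ℂ`. -/
def dz2bar (g : Bicomplex → ℂ) : Bicomplex → ℂ :=
  fun w => (pd i2 g w + Complex.I * pd jj g w) / 2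

/-- `∂_{z₁}` applied componentwise to `f : 𝕋 → 𝕋`. -/
def dZ1 (f : Bicomplex → Bicomplex) : Bicomplex → Bicomplex :=
  fun w => ⟨dz1 (s1 f) w, dz1 (s2 f) w⟩

/-- `∂_{z₂}` applied componentwise to `f : 𝕋 → 𝕋`. -/
def dZ2 (f : Bicomplex → Bicomplex) : Bicomplex → Bicomplex :=
  fun w => ⟨dz2 (s1 f) w, dz2 (s2 f) w⟩

/-- `∂_{z̄₁}` applied componentwise to `f : 𝕋 → 𝕋`. -/
def dZ1bar (f : Bicomplex → Bicomplex) : Bicomplex → Bicomplex :=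
  fun w => ⟨dz1bar (s1 f) w, dz1bar (s2 f) w⟩

/-- `∂_{z̄₂}` applied componentwise to `f : 𝕋 → 𝕋`. -/
def dZ2bar (f : Bicomplex → Bicomplex) : Bicomplex → Bicomplex :=
  fun w => ⟨dz2bar (s1 f) w, dz2bar (s2 f) w⟩

/-- `∂_ω = ½(∂_{z₁} - i₂ ∂_{z₂})`. -/
def dOm (f : Bicomplex → Bicomplex) : Bicomplex → Bicomplex :=
  fun w => ofComplex (1 / 2) * (dZ1 f w - i2 * dZ2 f w)

/-- `∂_{ω†₂} = ∂_ω̄ = ½(∂_{z₁} + i₂ ∂_{z₂})`. -/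
def dOmBar (f : Bicomplex → Bicomplex) : Bicomplex → Bicomplex :=
  fun w => ofComplex (1 / 2) * (dZ1 f w + i2 * dZ2 f w)

/-- `∂_{ω†₁} = ½(∂_{z̄₁} - i₂ ∂_{z̄₂})`. -/
def dOmDag1 (f : Bicomplex → Bicomplex) : Bicomplex → Bicomplex :=
  fun w => ofComplex (1 / 2) * (dZ1bar f w - i2 * dZ2bar f w)

/-- `∂_{ω†₃} = ½(∂_{z̄₁} + i₂ ∂_{z̄₂})`. -/
def dOmDag3 (f : Bicomplex → Bicomplex) : Bicomplex → Bicomplex :=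
  fun w => ofComplex (1 / 2) * (dZ1bar f w + i2 * dZ2bar f w)

/-- The complexified Laplacian `Δ_ℂ = ∂²_{z₁} + ∂²_{z₂}` acting on `ℂ(i₁)`-valued functions. -/
def lapC (g : Bicomplex → ℂ) : Bicomplex → ℂ :=
  fun w => dz1 (dz1 g) w + dz2 (dz2 g) w

/-- The vector part in the `i₂`-representation `w = ζ₁ + ζ₂ i₁` with `ζ₁, ζ₂ ∈ ℂ(i₂)`:
for `w = x₁ + x₂i₁ + x₃i₂ + x₄j`, `Vec(w) = x₂ + x₄ i₂`, encoded as the complex number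
`x₂ + x₄ i`. -/
def vec2 (w : Bicomplex) : ℂ := ⟨w.z1.im, w.z2.im⟩

/-- Embedding of `ℂ(i₂)` into `𝕋`: the complex number `a + b i` represents `a + b i₂`. -/
def ofC2 (c : ℂ) : Bicomplex := ⟨(c.re : ℂ), (c.im : ℂ)⟩

/-- Multiplication of hyperbolic numbers `ℂ(j) = {x + yj}`, encoded as pairs in `ℝ × ℝ`. -/
def hmul (a b : ℝ × ℝ) : ℝ × ℝ := (a.1 * b.1 + a.2 * b.2, a.1 * b.2 + a.2 * b.1)

/-- Division of hyperbolic numbers (junk value when the denominator is a zero divisor). -/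
def hdiv (a b : ℝ × ℝ) : ℝ × ℝ :=
  hmul a (b.1 / (b.1 ^ 2 - b.2 ^ 2), -b.2 / (b.1 ^ 2 - b.2 ^ 2))

/-- Embedding of the hyperbolic numbers `ℂ(j)` into `𝕋`: `(x, y) ↦ x + y j`. -/
def ofHyp (a : ℝ × ℝ) : Bicomplex := ⟨(a.1 : ℂ), (a.2 : ℂ) * Complex.I⟩

/-- The vector part in the `j`-representation `w = ζ₁ + ζ₂ i₁` with `ζ₁, ζ₂ ∈ ℂ(j)`:
for `w = x₁ + x₂i₁ + x₃i₂ + x₄j`, `Vec(w) = x₂ - x₃ j`, encoded as the pair `(x₂, -x₃)`. -/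
def vec3 (w : Bicomplex) : ℝ × ℝ := (w.z1.im, -w.z2.re)

/-- The `𝕋`-cartesian set `X₁ ×ₑ X₂ = {w : P₁ w ∈ X₁ ∧ P₂ w ∈ X₂}`. -/
def eProd (X₁ X₂ : Set ℂ) : Set Bicomplex := {w | P1 w ∈ X₁ ∧ P2 w ∈ X₂}

/-- `(F, G)` is an `i₁`-generating pair on `D`. -/
def GenPair1 (F G : Bicomplex → Bicomplex) (D : Set Bicomplex) : Prop :=
  TContDiffOn 2 F D ∧ TContDiffOn 2 G D ∧ ∀ w ∈ D, (dag2 (F w) * G w).z2 ≠ 0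

/-- `(F, G)` is an `i₂`-generating pair on `D`. -/
def GenPair2 (F G : Bicomplex → Bicomplex) (D : Set Bicomplex) : Prop :=
  TContDiffOn 2 F D ∧ TContDiffOn 2 G D ∧ ∀ w ∈ D, vec2 (dag1 (F w) * G w) ≠ 0

/-- `(F, G)` is a `j`-generating pair on `D`. -/
def GenPairJ (F G : Bicomplex → Bicomplex) (D : Set Bicomplex) : Prop :=
  TContDiffOn 2 F D ∧ TContDiffOn 2 G D ∧ ∀ w ∈ D, vec3 (dag3 (F w) * G w) ≠ 0

/-- The unique `λ₀ ∈ ℂ(i₁)` with `w(ω₀) = λ₀ F(ω₀) + μ₀ G(ω₀)`. -/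
def lam1 (F G wf : Bicomplex → Bicomplex) (ω₀ : Bicomplex) : ℂ :=
  (dag2 (wf ω₀) * G ω₀).z2 / (dag2 (F ω₀) * G ω₀).z2

/-- The unique `μ₀ ∈ ℂ(i₁)` with `w(ω₀) = λ₀ F(ω₀) + μ₀ G(ω₀)`. -/
def mu1 (F G wf : Bicomplex → Bicomplex) (ω₀ : Bicomplex) : ℂ :=
  -((dag2 (wf ω₀) * F ω₀).z2 / (dag2 (F ω₀) * G ω₀).z2)

/-- `w` has `(F,G)_{i₁}`-derivative `d` at `ω₀`. -/
def HasFGDeriv1 (F G wf : Bicomplex → Bicomplex) (d ω₀ : Bicomplex) : Prop :=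
  Tendsto
    (fun ω => (wf ω - ofComplex (lam1 F G wf ω₀) * F ω - ofComplex (mu1 F G wf ω₀) * G ω)
        / (ω - ω₀))
    (𝓝[invertibleDiff ω₀] ω₀) (𝓝 d)

/-- The unique `λ₀ ∈ ℂ(j)` with `w(ω₀) = λ₀ F(ω₀) + μ₀ G(ω₀)`. -/
def lamJ (F G wf : Bicomplex → Bicomplex) (ω₀ : Bicomplex) : ℝ × ℝ :=
  hdiv (vec3 (dag3 (wf ω₀) * G ω₀)) (vec3 (dag3 (F ω₀) * G ω₀))

/-- The unique `μ₀ ∈ ℂ(j)` with `w(ω₀) = λ₀ F(ω₀) + μ₀ G(ω₀)`. -/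
def muJ (F G wf : Bicomplex → Bicomplex) (ω₀ : Bicomplex) : ℝ × ℝ :=
  -(hdiv (vec3 (dag3 (wf ω₀) * F ω₀)) (vec3 (dag3 (F ω₀) * G ω₀)))

/-- `w` has `(F,G)_j`-derivative `d` at `ω₀`. -/
def HasFGDerivJ (F G wf : Bicomplex → Bicomplex) (d ω₀ : Bicomplex) : Prop :=
  Tendsto
    (fun ω => (wf ω - ofHyp (lamJ F G wf ω₀) * F ω - ofHyp (muJ F G wf ω₀) * G ω) / (ω - ω₀))
    (𝓝[invertibleDiff ω₀] ω₀) (𝓝 d)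

/-- `w` is `(F,G)_j`-pseudoanalytic on `D`. -/
def PseudoanalyticJ (F G wf : Bicomplex → Bicomplex) (D : Set Bicomplex) : Prop :=
  ∀ ω ∈ D, ∃ d, HasFGDerivJ F G wf d ω

/-- `w` has continuous partial derivatives in a neighborhood of `ω₀`. -/
def HasContPartialsNear (f : Bicomplex → Bicomplex) (w₀ : Bicomplex) : Prop :=
  ∃ V ∈ 𝓝 w₀, ∀ e ∈ ({1, i1, i2, jj} : Set Bicomplex),
    (∀ w ∈ V, pdTExists e f w) ∧ ContinuousOn (pdT e f) V

/-! Characteristic coefficients with respect to the `†₂` conjugation (`i₁` case). -/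

def denom2 (F G : Bicomplex → Bicomplex) (w : Bicomplex) : Bicomplex :=
  F w * dag2 (G w) - dag2 (F w) * G w

def aCoef2₁ (F G : Bicomplex → Bicomplex) (w : Bicomplex) : Bicomplex :=
  -((dag1 (F w) * dOmDag1 G w - dOmDag1 F w * dag1 (G w)) / denom2 F G w)

def bCoef2₁ (F G : Bicomplex → Bicomplex) (w : Bicomplex) : Bicomplex :=
  (F w * dOmDag1 G w - dOmDag1 F w * G w) / denom2 F G w

def aCoef2₂ (F G : Bicomplex → Bicomplex) (w : Bicomplex) : Bicomplex :=
  -((dag2 (F w) * dOmBar G w - dOmBar F w * dag2 (G w)) / denom2 F G w)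

def bCoef2₂ (F G : Bicomplex → Bicomplex) (w : Bicomplex) : Bicomplex :=
  (F w * dOmBar G w - dOmBar F w * G w) / denom2 F G w

def aCoef2₃ (F G : Bicomplex → Bicomplex) (w : Bicomplex) : Bicomplex :=
  -((dag3 (F w) * dOmDag3 G w - dOmDag3 F w * dag3 (G w)) / denom2 F G w)

def bCoef2₃ (F G : Bicomplex → Bicomplex) (w : Bicomplex) : Bicomplex :=
  (F w * dOmDag3 G w - dOmDag3 F w * G w) / denom2 F G w

def Acoef2 (F G : Bicomplex → Bicomplex) (w : Bicomplex) : Bicomplex :=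
  -((dag2 (F w) * dOm G w - dOm F w * dag2 (G w)) / denom2 F G w)

def Bcoef2 (F G : Bicomplex → Bicomplex) (w : Bicomplex) : Bicomplex :=
  (F w * dOm G w - dOm F w * G w) / denom2 F G w

/-! Characteristic coefficients with respect to the `†₃` conjugation (`j` case). -/

def denom3 (F G : Bicomplex → Bicomplex) (w : Bicomplex) : Bicomplex :=
  F w * dag3 (G w) - dag3 (F w) * G w

def aCoef3₁ (F G : Bicomplex → Bicomplex) (w : Bicomplex) : Bicomplex :=
  -((dag1 (F w) * dOmDag1 G w - dOmDag1 F w * dag1 (G w)) / denom3 F G w)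

def bCoef3₁ (F G : Bicomplex → Bicomplex) (w : Bicomplex) : Bicomplex :=
  (F w * dOmDag1 G w - dOmDag1 F w * G w) / denom3 F G w

def aCoef3₂ (F G : Bicomplex → Bicomplex) (w : Bicomplex) : Bicomplex :=
  -((dag2 (F w) * dOmBar G w - dOmBar F w * dag2 (G w)) / denom3 F G w)

def bCoef3₂ (F G : Bicomplex → Bicomplex) (w : Bicomplex) : Bicomplex :=
  (F w * dOmBar G w - dOmBar F w * G w) / denom3 F G w

def aCoef3₃ (F G : Bicomplex → Bicomplex) (w : Bicomplex) : Bicomplex :=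
  -((dag3 (F w) * dOmDag3 G w - dOmDag3 F w * dag3 (G w)) / denom3 F G w)

def bCoef3₃ (F G : Bicomplex → Bicomplex) (w : Bicomplex) : Bicomplex :=
  (F w * dOmDag3 G w - dOmDag3 F w * G w) / denom3 F G w

def Acoef3 (F G : Bicomplex → Bicomplex) (w : Bicomplex) : Bicomplex :=
  -((dag3 (F w) * dOm G w - dOm F w * dag3 (G w)) / denom3 F G w)

def Bcoef3 (F G : Bicomplex → Bicomplex) (w : Bicomplex) : Bicomplex :=
  (F w * dOm G w - dOm F w * G w) / denom3 F G w

/-! Classical (Bers) pseudoanalytic function theory in `ℂ(i₁)`. -/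

/-- A complex (in `i₁`) generating pair on `D ⊆ ℂ(i₁)`. -/
def ComplexGenPair (Fe Ge : ℂ → ℂ) (D : Set ℂ) : Prop :=
  ContDiffOn ℝ 2 Fe D ∧ ContDiffOn ℝ 2 Ge D ∧
    ∀ z ∈ D, ((starRingEnd ℂ) (Fe z) * Ge z).im ≠ 0

/-- The unique real `λ₀` with `w(z₀) = λ₀ F(z₀) + μ₀ G(z₀)`. -/
def lamBers (Fe Ge we : ℂ → ℂ) (z₀ : ℂ) : ℝ :=
  ((starRingEnd ℂ) (we z₀) * Ge z₀).im / ((starRingEnd ℂ) (Fe z₀) * Ge z₀).im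

/-- The unique real `μ₀` with `w(z₀) = λ₀ F(z₀) + μ₀ G(z₀)`. -/
def muBers (Fe Ge we : ℂ → ℂ) (z₀ : ℂ) : ℝ :=
  -(((starRingEnd ℂ) (we z₀) * Fe z₀).im / ((starRingEnd ℂ) (Fe z₀) * Ge z₀).im)

/-- `w_e` has Bers `(F_e,G_e)`-derivative `d` at `z₀`. -/
def HasBersDerivAt (Fe Ge we : ℂ → ℂ) (d z₀ : ℂ) : Prop :=
  Tendsto
    (fun z => (we z - (lamBers Fe Ge we z₀ : ℂ) * Fe z - (muBers Fe Ge we z₀ : ℂ) * Ge z)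
        / (z - z₀))
    (𝓝[≠] z₀) (𝓝 d)

/-- `w_e` is `(F_e,G_e)`-pseudoanalytic (in the sense of Bers) on `D`. -/
def BersPseudoanalyticOn (Fe Ge we : ℂ → ℂ) (D : Set ℂ) : Prop :=
  ∀ z ∈ D, ∃ d, HasBersDerivAt Fe Ge we d z

/-- `∂_z̄ = ½(∂ₓ + i ∂_y)` for functions `ℂ(i₁) → ℂ(i₁)`. -/
def dzbarC (g : ℂ → ℂ) (z : ℂ) : ℂ :=
  (deriv (fun t : ℝ => g (z + t)) 0 + Complex.I * deriv (fun t : ℝ => g (z + t * Complex.I)) 0) / 2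

/-- The Bers characteristic coefficient `a_{(F_e,G_e)}`. -/
def aBers (Fe Ge : ℂ → ℂ) (z : ℂ) : ℂ :=
  -(((starRingEnd ℂ) (Fe z) * dzbarC Ge z - dzbarC Fe z * (starRingEnd ℂ) (Ge z)) /
    (Fe z * (starRingEnd ℂ) (Ge z) - (starRingEnd ℂ) (Fe z) * Ge z))

/-- The Bers characteristic coefficient `b_{(F_e,G_e)}`. -/
def bBers (Fe Ge : ℂ → ℂ) (z : ℂ) : ℂ :=
  (Fe z * dzbarC Ge z - dzbarC Fe z * Ge z) /
    (Fe z * (starRingEnd ℂ) (Ge z) - (starRingEnd ℂ) (Fe z) * Ge z)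

/-- `(F, G)` is the `i₂e`-generating pair associated to complex generating pairs
`(F_{e1}, G_{e1})` on `D₁` and `(F_{e2}, G_{e2})` on `D₂`. -/
def I2eGenPair (Fe1 Ge1 Fe2 Ge2 : ℂ → ℂ) (D₁ D₂ : Set ℂ)
    (F G : Bicomplex → Bicomplex) : Prop :=
  ComplexGenPair Fe1 Ge1 D₁ ∧ ComplexGenPair Fe2 Ge2 D₂ ∧
  (∀ w, F w = ofComplex (Fe1 (P1 w)) * e1 + ofComplex (Fe2 (P2 w)) * e2) ∧
  (∀ w, G w = ofComplex (Ge1 (P1 w)) * e1 + ofComplex (Ge2 (P2 w)) * e2)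

end Bicomplex

open Bicomplex

/-!
In idempotent coordinates `ω = α e₁ + β e₂` multiplication and division act componentwise, and
`ω - ω₀` is invertible iff `α ≠ α₀` and `β ≠ β₀`. Since `F` and `G` split along `e₁, e₂`, the
`e₁`-component of the `(F,G)_j`-derivative at `ω₀ = α₀ e₁ + β₀ e₂` says
`P₁ w(α, β) - g(α) = O(α - α₀)` as `(α, β) → (α₀, β₀)` with `α ≠ α₀, β ≠ β₀`, where
`g = λ₁ F_{e1} + μ₁ G_{e1}` is continuous and, by Cramer's rule, `g(α₀) = P₁ w(ω₀)`.
The bound holds on a whole neighbourhood, so for `β₁` near `β₀` the value `P₁ w(α, β)` tends both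
to `P₁ w(α₀, β₁)` and to `P₁ w(α₀, β₀)` as `(α, β) → (α₀, β₁)`. Hence `P₁ w` is locally, and on
the connected `D₂` globally, independent of `β`; symmetrically `P₂ w` does not depend on `α`.
-/

open Asymptotics

section
variable {α E F : Type*} [NormedAddCommGroup E] [NormedAddCommGroup F] {l : Filter α}

theorem Asymptotics.IsBigO.tendsto_of_sub {u v : α → E} {k : α → F} {c : E}
    (h : (fun x => u x - v x) =O[l] k) (hk : Tendsto k l (𝓝 0)) (hv : Tendsto v l (𝓝 c)) :
    Tendsto u l (𝓝 c) := by
  simpa using (h.trans_tendsto hk).add hv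

theorem Asymptotics.IsBigO.eventually_isBigO_nhdsWithin {X : Type*} [TopologicalSpace X]
    {f : X → E} {k : X → F} {s : Set X} {x : X} (h : f =O[𝓝[s] x] k) :
    ∀ᶠ y in 𝓝 x, f =O[𝓝[s] y] k := by
  obtain ⟨c, hc⟩ := h.bound
  rw [eventually_nhdsWithin_iff] at hc
  filter_upwards [hc.eventually_nhds] with y hy
  exact IsBigO.of_bound c (eventually_nhdsWithin_iff.2 hy)

end

section
variable {𝕜 E : Type*} [NontriviallyNormedField 𝕜] [NormedAddCommGroup E]

-- `𝓝[≠] p.1 ×ˢ 𝓝[≠] p.2` is the idempotent picture of `ω → ω₀` with `ω - ω₀` invertible.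
def FstApproxAt (f : 𝕜 × 𝕜 → E) (p : 𝕜 × 𝕜) : Prop :=
  ∃ g : 𝕜 → E, ContinuousAt g p.1 ∧ g p.1 = f p ∧
    (fun q => f q - g q.1) =O[𝓝[≠] p.1 ×ˢ 𝓝[≠] p.2] fun q => q.1 - p.1

theorem fstApproxAt_of_tendsto {f : 𝕜 × 𝕜 → 𝕜} {g : 𝕜 → 𝕜} {p : 𝕜 × 𝕜} {d : 𝕜}
    (hg : ContinuousAt g p.1) (hgf : g p.1 = f p)
    (h : Tendsto (fun q => (f q - g q.1) / (q.1 - p.1)) (𝓝[≠] p.1 ×ˢ 𝓝[≠] p.2) (𝓝 d)) :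
    FstApproxAt f p := by
  refine ⟨g, hg, hgf, isBigO_of_div_tendsto_nhds ?_ d h⟩
  filter_upwards [prod_mem_prod self_mem_nhdsWithin univ_mem] with q hq h0
  exact absurd (sub_eq_zero.1 h0) hq.1

theorem FstApproxAt.eventually_apply_eq {f : 𝕜 × 𝕜 → E} {a b : 𝕜}
    (h : FstApproxAt f (a, b)) :
    ∀ᶠ b' in 𝓝 b, FstApproxAt f (a, b') → f (a, b') = f (a, b) := by
  obtain ⟨g, hg, hgf, hO⟩ := h
  rw [← nhdsWithin_prod_eq] at hO
  filter_upwards [(Continuous.prodMk_right a).tendsto b |>.eventually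
    hO.eventually_isBigO_nhdsWithin] with b' hOb' ⟨g', hg', hg'f, hO'⟩
  rcases eq_or_ne b' b with rfl | hne
  · rfl
  set l := 𝓝[≠] a ×ˢ 𝓝[≠] b'
  have hle : l ≤ 𝓝[{a}ᶜ ×ˢ {b}ᶜ] (a, b') := by
    rw [nhdsWithin_prod_eq]
    exact prod_mono le_rfl (nhdsWithin_le_nhds.trans
      (nhdsWithin_eq_nhds.2 (isOpen_compl_singleton.mem_nhds hne)).ge)
  have hfst : Tendsto Prod.fst l (𝓝 a) := tendsto_fst.mono_right nhdsWithin_le_nhds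
  have hk : Tendsto (fun q : 𝕜 × 𝕜 => q.1 - a) l (𝓝 0) := by
    simpa using hfst.sub_const a
  rw [← hg'f, ← hgf]
  exact tendsto_nhds_unique (hO'.tendsto_of_sub hk (hg'.tendsto.comp hfst))
    ((hOb'.mono hle).tendsto_of_sub hk (hg.tendsto.comp hfst))

theorem IsPreconnected.apply_eq_of_fstApproxAt {t : Set 𝕜} (ht : IsPreconnected t)
    {f : 𝕜 × 𝕜 → E} {a : 𝕜} (hf : ∀ b ∈ t, FstApproxAt f (a, b)) {b b' : 𝕜}
    (hb : b ∈ t) (hb' : b' ∈ t) : f (a, b) = f (a, b') := by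
  refine ht.induction₂' (fun y z => f (a, y) = f (a, z)) (fun y hy => ?_)
    (fun _ _ _ _ _ _ => Eq.trans) hb hb'
  filter_upwards [nhdsWithin_le_nhds (hf y hy).eventually_apply_eq, self_mem_nhdsWithin]
    with z hz hzt
  exact ⟨(hz (hf z hzt)).symm, hz (hf z hzt)⟩

end

lemma Complex.real_cramer {f g : ℂ} (u : ℂ) (h : (starRingEnd ℂ f * g).im ≠ 0) :
    (((starRingEnd ℂ u * g).im / (starRingEnd ℂ f * g).im : ℝ) : ℂ) * f
      - (((starRingEnd ℂ u * f).im / (starRingEnd ℂ f * g).im : ℝ) : ℂ) * g = u := by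
  simp only [Complex.mul_im, Complex.conj_re, Complex.conj_im, neg_mul, ← sub_eq_add_neg] at h ⊢
  have hD : g.im * f.re - g.re * f.im ≠ 0 := by rwa [mul_comm g.im, mul_comm g.re]
  apply Complex.ext <;>
  · simp only [Complex.sub_re, Complex.sub_im, Complex.mul_re, Complex.mul_im, Complex.ofReal_re,
      Complex.ofReal_im]
    field_simp
    ring

namespace Bicomplex

@[simp] lemma sub_z1 (u v : Bicomplex) : (u - v).z1 = u.z1 - v.z1 := by
  simp [sub_eq_add_neg]

@[simp] lemma sub_z2 (u v : Bicomplex) : (u - v).z2 = u.z2 - v.z2 := by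
  simp [sub_eq_add_neg]

@[simp] lemma P1_add (u v : Bicomplex) : P1 (u + v) = P1 u + P1 v := by simp [P1]; ring

@[simp] lemma P2_add (u v : Bicomplex) : P2 (u + v) = P2 u + P2 v := by simp [P2]; ring

@[simp] lemma P1_sub (u v : Bicomplex) : P1 (u - v) = P1 u - P1 v := by simp [P1]; ring

@[simp] lemma P2_sub (u v : Bicomplex) : P2 (u - v) = P2 u - P2 v := by simp [P2]; ring

@[simp] lemma P1_mul (u v : Bicomplex) : P1 (u * v) = P1 u * P1 v := by
  simp only [P1, mul_z1, mul_z2]; linear_combination -(u.z2 * v.z2) * I_sq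

@[simp] lemma P2_mul (u v : Bicomplex) : P2 (u * v) = P2 u * P2 v := by
  simp only [P2, mul_z1, mul_z2]; linear_combination -(u.z2 * v.z2) * I_sq

@[simp] lemma P1_ofComplex (c : ℂ) : P1 (ofComplex c) = c := by simp [P1, ofComplex]

@[simp] lemma P2_ofComplex (c : ℂ) : P2 (ofComplex c) = c := by simp [P2, ofComplex]

@[simp] lemma P1_e1 : P1 e1 = 1 := by simp only [P1, e1]; linear_combination -I_sq / 2

@[simp] lemma P2_e1 : P2 e1 = 0 := by simp only [P2, e1]; linear_combination I_sq / 2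

@[simp] lemma P1_e2 : P1 e2 = 0 := by simp only [P1, e2]; linear_combination I_sq / 2

@[simp] lemma P2_e2 : P2 e2 = 1 := by simp only [P2, e2]; linear_combination -I_sq / 2

lemma P1_ofHyp (p : ℝ × ℝ) : P1 (ofHyp p) = ((p.1 + p.2 : ℝ) : ℂ) := by
  simp only [P1, ofHyp]; push_cast; linear_combination -(p.2 : ℂ) * I_sq

lemma P2_ofHyp (p : ℝ × ℝ) : P2 (ofHyp p) = ((p.1 - p.2 : ℝ) : ℂ) := by
  simp only [P2, ofHyp]; push_cast; linear_combination (p.2 : ℂ) * I_sq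

@[simp] lemma P1_dag3 (u : Bicomplex) : P1 (dag3 u) = starRingEnd ℂ (P1 u) := by
  simp [P1, dag3]

@[simp] lemma P2_dag3 (u : Bicomplex) : P2 (dag3 u) = starRingEnd ℂ (P2 u) := by
  simp [P2, dag3]

lemma sq_add_sq_eq_P1_mul_P2 (u : Bicomplex) : u.z1 ^ 2 + u.z2 ^ 2 = P1 u * P2 u := by
  simp only [P1, P2]; linear_combination u.z2 ^ 2 * I_sq

-- `u⁻¹` is junk when `u` is a zero divisor; `P2 u ≠ 0` is what makes the `e₁`-component right.
lemma P1_inv {u : Bicomplex} (h : P2 u ≠ 0) : P1 u⁻¹ = (P1 u)⁻¹ := by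
  have : P1 u⁻¹ = P2 u / (u.z1 ^ 2 + u.z2 ^ 2) := by
    simp only [P1, P2, Inv.inv]; ring
  rw [this, sq_add_sq_eq_P1_mul_P2, div_mul_cancel_right₀ h]

lemma P2_inv {u : Bicomplex} (h : P1 u ≠ 0) : P2 u⁻¹ = (P2 u)⁻¹ := by
  have : P2 u⁻¹ = P1 u / (u.z1 ^ 2 + u.z2 ^ 2) := by
    simp only [P1, P2, Inv.inv]; ring
  rw [this, sq_add_sq_eq_P1_mul_P2, div_mul_cancel_left₀ h]

lemma P1_div (u : Bicomplex) {v : Bicomplex} (h : P2 v ≠ 0) : P1 (u / v) = P1 u / P1 v := by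
  rw [show u / v = u * v⁻¹ from rfl, P1_mul, P1_inv h, div_eq_mul_inv]

lemma P2_div (u : Bicomplex) {v : Bicomplex} (h : P1 v ≠ 0) : P2 (u / v) = P2 u / P2 v := by
  rw [show u / v = u * v⁻¹ from rfl, P2_mul, P2_inv h, div_eq_mul_inv]

def ofIdem (α β : ℂ) : Bicomplex := ofComplex α * e1 + ofComplex β * e2

@[simp] lemma P1_ofIdem (α β : ℂ) : P1 (ofIdem α β) = α := by simp [ofIdem]

@[simp] lemma P2_ofIdem (α β : ℂ) : P2 (ofIdem α β) = β := by simp [ofIdem]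

lemma ofIdem_P1_P2 (u : Bicomplex) : ofIdem (P1 u) (P2 u) = u := by
  ext
  · simp [ofIdem, P1, P2, ofComplex, e1, e2]; ring
  · simp [ofIdem, P1, P2, ofComplex, e1, e2]; linear_combination -u.z2 * I_sq

lemma ext_P1_P2 {u v : Bicomplex} (h1 : P1 u = P1 v) (h2 : P2 u = P2 v) : u = v := by
  rw [← ofIdem_P1_P2 u, ← ofIdem_P1_P2 v, h1, h2]

lemma mem_invertibleDiff_iff {ω₀ ω : Bicomplex} :
    ω ∈ invertibleDiff ω₀ ↔ P1 ω ≠ P1 ω₀ ∧ P2 ω ≠ P2 ω₀ := by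
  change _ ≠ 0 ↔ _
  rw [sq_add_sq_eq_P1_mul_P2, mul_ne_zero_iff, P1_sub, P2_sub,
    sub_ne_zero, sub_ne_zero]

@[fun_prop] lemma continuous_z1 : Continuous z1 :=
  continuous_fst.comp (continuous_induced_dom (f := toProd))

@[fun_prop] lemma continuous_z2 : Continuous z2 :=
  continuous_snd.comp (continuous_induced_dom (f := toProd))

lemma continuous_P1 : Continuous P1 := by unfold P1; fun_prop

lemma continuous_P2 : Continuous P2 := by unfold P2; fun_prop

lemma continuous_ofIdem : Continuous fun q : ℂ × ℂ => ofIdem q.1 q.2 := by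
  refine continuous_induced_rng.2 ?_
  have : toProd ∘ (fun q : ℂ × ℂ => ofIdem q.1 q.2) =
      fun q => ((q.1 + q.2) / 2, (q.1 - q.2) * I / 2) := by
    funext q; simp [toProd, ofIdem, ofComplex, e1, e2]; constructor <;> ring
  rw [this]; fun_prop

lemma hdiv_fst_add_snd (A : ℝ × ℝ) {Δ : ℝ × ℝ} (h₁ : Δ.1 + Δ.2 ≠ 0) (h₂ : Δ.1 - Δ.2 ≠ 0) :
    (hdiv A Δ).1 + (hdiv A Δ).2 = (A.1 + A.2) / (Δ.1 + Δ.2) := by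
  have : Δ.1 ^ 2 - Δ.2 ^ 2 = (Δ.1 + Δ.2) * (Δ.1 - Δ.2) := by ring
  simp only [hdiv, hmul, this]
  field_simp
  ring

lemma hdiv_fst_sub_snd (A : ℝ × ℝ) {Δ : ℝ × ℝ} (h₁ : Δ.1 + Δ.2 ≠ 0) (h₂ : Δ.1 - Δ.2 ≠ 0) :
    (hdiv A Δ).1 - (hdiv A Δ).2 = (A.1 - A.2) / (Δ.1 - Δ.2) := by
  have : Δ.1 ^ 2 - Δ.2 ^ 2 = (Δ.1 + Δ.2) * (Δ.1 - Δ.2) := by ring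
  simp only [hdiv, hmul, this]
  field_simp
  ring

lemma vec3_fst_add_snd (u : Bicomplex) : (vec3 u).1 + (vec3 u).2 = (P1 u).im := by
  simp [vec3, P1]; ring

lemma vec3_fst_sub_snd (u : Bicomplex) : (vec3 u).1 - (vec3 u).2 = (P2 u).im := by
  simp [vec3, P2]

lemma eq_ofHyp_lamJ_mul_add_ofHyp_muJ_mul (F G w : Bicomplex → Bicomplex) (ω₀ : Bicomplex)
    (h₁ : (starRingEnd ℂ (P1 (F ω₀)) * P1 (G ω₀)).im ≠ 0)
    (h₂ : (starRingEnd ℂ (P2 (F ω₀)) * P2 (G ω₀)).im ≠ 0) :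
    w ω₀ = ofHyp (lamJ F G w ω₀) * F ω₀ + ofHyp (muJ F G w ω₀) * G ω₀ := by
  have hΔ₁ : (vec3 (dag3 (F ω₀) * G ω₀)).1 + (vec3 (dag3 (F ω₀) * G ω₀)).2 ≠ 0 := by
    rwa [vec3_fst_add_snd, P1_mul, P1_dag3]
  have hΔ₂ : (vec3 (dag3 (F ω₀) * G ω₀)).1 - (vec3 (dag3 (F ω₀) * G ω₀)).2 ≠ 0 := by
    rwa [vec3_fst_sub_snd, P2_mul, P2_dag3]
  apply ext_P1_P2
  · simp only [P1_add, P1_mul, P1_ofHyp, lamJ, muJ, Prod.fst_neg, Prod.snd_neg, ← neg_add,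
      hdiv_fst_add_snd _ hΔ₁ hΔ₂, vec3_fst_add_snd, P1_dag3]
    rw [Complex.ofReal_neg, neg_mul, ← sub_eq_add_neg]
    exact (Complex.real_cramer _ h₁).symm
  · simp only [P2_add, P2_mul, P2_ofHyp, lamJ, muJ, Prod.fst_neg, Prod.snd_neg, ← neg_sub',
      hdiv_fst_sub_snd _ hΔ₁ hΔ₂, vec3_fst_sub_snd, P2_dag3]
    rw [Complex.ofReal_neg, neg_mul, ← sub_eq_add_neg]
    exact (Complex.real_cramer _ h₂).symm

lemma tendsto_ofIdem_nhdsWithin_invertibleDiff {α : Type*} {l : Filter α} {φ ψ : α → ℂ}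
    {a b : ℂ} (hφ : Tendsto φ l (𝓝[≠] a)) (hψ : Tendsto ψ l (𝓝[≠] b)) :
    Tendsto (fun x => ofIdem (φ x) (ψ x)) l (𝓝[invertibleDiff (ofIdem a b)] (ofIdem a b)) := by
  rw [tendsto_nhdsWithin_iff] at hφ hψ ⊢
  refine ⟨((continuous_ofIdem.tendsto (a, b)).comp (hφ.1.prodMk_nhds hψ.1) :), ?_⟩
  filter_upwards [hφ.2, hψ.2] with x hx hy
  exact mem_invertibleDiff_iff.2 ⟨by simpa using hx, by simpa using hy⟩

section
variable {D₁ D₂ : Set ℂ} {Fe1 Ge1 Fe2 Ge2 : ℂ → ℂ} {F G : Bicomplex → Bicomplex} {a b : ℂ}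

lemma I2eGenPair.eq_ofHyp_lamJ_mul_add_ofHyp_muJ_mul
    (hFG : I2eGenPair Fe1 Ge1 Fe2 Ge2 D₁ D₂ F G) (w : Bicomplex → Bicomplex)
    (ha : a ∈ D₁) (hb : b ∈ D₂) :
    w (ofIdem a b) = ofHyp (lamJ F G w (ofIdem a b)) * F (ofIdem a b)
      + ofHyp (muJ F G w (ofIdem a b)) * G (ofIdem a b) := by
  obtain ⟨⟨-, -, h₁⟩, ⟨-, -, h₂⟩, hF, hG⟩ := hFG
  exact Bicomplex.eq_ofHyp_lamJ_mul_add_ofHyp_muJ_mul F G w _ (by simpa [hF, hG] using h₁ a ha)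
    (by simpa [hF, hG] using h₂ b hb)

theorem fstApproxAt_P1 (hD₁ : IsOpen D₁) (hFG : I2eGenPair Fe1 Ge1 Fe2 Ge2 D₁ D₂ F G)
    {w : Bicomplex → Bicomplex} (ha : a ∈ D₁) (hb : b ∈ D₂)
    (hw : ∃ d, HasFGDerivJ F G w d (ofIdem a b)) :
    FstApproxAt (fun q : ℂ × ℂ => P1 (w (ofIdem q.1 q.2))) (a, b) := by
  obtain ⟨d, hd⟩ := hw
  have hrep := hFG.eq_ofHyp_lamJ_mul_add_ofHyp_muJ_mul w ha hb
  obtain ⟨⟨hFe, hGe, -⟩, -, hF, hG⟩ := hFG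
  set lam₀ := P1 (ofHyp (lamJ F G w (ofIdem a b)))
  set mu₀ := P1 (ofHyp (muJ F G w (ofIdem a b)))
  have hU := hD₁.mem_nhds ha
  refine fstApproxAt_of_tendsto (g := fun ζ => lam₀ * Fe1 ζ + mu₀ * Ge1 ζ) (d := P1 d)
    ((continuousAt_const.mul (hFe.continuousOn.continuousAt hU)).add
      (continuousAt_const.mul (hGe.continuousOn.continuousAt hU)))
    (by simpa [hF, hG] using congrArg P1 hrep.symm) ?_
  refine ((continuous_P1.tendsto d).comp
    (hd.comp (tendsto_ofIdem_nhdsWithin_invertibleDiff tendsto_fst tendsto_snd))).congr' ?_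
  filter_upwards [prod_mem_prod univ_mem self_mem_nhdsWithin] with q hq
  have hP2 : P2 (ofIdem q.1 q.2 - ofIdem a b) ≠ 0 := by simpa [sub_eq_zero] using hq.2
  simp [P1_div _ hP2, hF, hG, lam₀, mu₀, sub_sub]

theorem fstApproxAt_P2 (hD₂ : IsOpen D₂) (hFG : I2eGenPair Fe1 Ge1 Fe2 Ge2 D₁ D₂ F G)
    {w : Bicomplex → Bicomplex} (ha : a ∈ D₁) (hb : b ∈ D₂)
    (hw : ∃ d, HasFGDerivJ F G w d (ofIdem a b)) :
    FstApproxAt (fun q : ℂ × ℂ => P2 (w (ofIdem q.2 q.1))) (b, a) := by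
  obtain ⟨d, hd⟩ := hw
  have hrep := hFG.eq_ofHyp_lamJ_mul_add_ofHyp_muJ_mul w ha hb
  obtain ⟨-, ⟨hFe, hGe, -⟩, hF, hG⟩ := hFG
  set lam₀ := P2 (ofHyp (lamJ F G w (ofIdem a b)))
  set mu₀ := P2 (ofHyp (muJ F G w (ofIdem a b)))
  have hU := hD₂.mem_nhds hb
  refine fstApproxAt_of_tendsto (g := fun ζ => lam₀ * Fe2 ζ + mu₀ * Ge2 ζ) (d := P2 d)
    ((continuousAt_const.mul (hFe.continuousOn.continuousAt hU)).add
      (continuousAt_const.mul (hGe.continuousOn.continuousAt hU)))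
    (by simpa [hF, hG] using congrArg P2 hrep.symm) ?_
  refine ((continuous_P2.tendsto d).comp
    (hd.comp (tendsto_ofIdem_nhdsWithin_invertibleDiff tendsto_snd tendsto_fst))).congr' ?_
  filter_upwards [prod_mem_prod univ_mem self_mem_nhdsWithin] with q hq
  have hP1 : P1 (ofIdem q.2 q.1 - ofIdem a b) ≠ 0 := by simpa [sub_eq_zero] using hq.2
  simp [P2_div _ hP1, hF, hG, lam₀, mu₀, sub_sub]

end

end Bicomplex

/-- If `(F, G)` is an `i₂e`-generating pair on `D₀ = D₁ ×ₑ D₂` and `w` is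
`(F,G)_j`-pseudoanalytic on `D₀`, then `w` decomposes as
`w(z₁ + z₂i₂) = w_{e1}(z₁ - z₂i₁)e₁ + w_{e2}(z₁ + z₂i₁)e₂` on `D₀`. -/
theorem idempotent_decomposition_of_pseudoanalyticJ (D₁ D₂ : Set ℂ)
    (hD₁ : IsOpen D₁) (hD₂ : IsOpen D₂) (hcD₁ : IsConnected D₁) (hcD₂ : IsConnected D₂)
    (Fe1 Ge1 Fe2 Ge2 : ℂ → ℂ) (F G : Bicomplex → Bicomplex)
    (hFG : I2eGenPair Fe1 Ge1 Fe2 Ge2 D₁ D₂ F G)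
    (w : Bicomplex → Bicomplex) (hw : PseudoanalyticJ F G w (eProd D₁ D₂)) :
    ∃ we1 we2 : ℂ → ℂ,
      ∀ ω ∈ eProd D₁ D₂,
        w ω = ofComplex (we1 (P1 ω)) * e1 + ofComplex (we2 (P2 ω)) * e2 := by
  have hwD : ∀ a ∈ D₁, ∀ b ∈ D₂, ∃ d, HasFGDerivJ F G w d (ofIdem a b) := fun a ha b hb =>
    hw _ ⟨by simpa using ha, by simpa using hb⟩
  obtain ⟨a₀, ha₀⟩ := hcD₁.nonempty
  obtain ⟨b₀, hb₀⟩ := hcD₂.nonempty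
  refine ⟨fun α => P1 (w (ofIdem α b₀)), fun β => P2 (w (ofIdem a₀ β)), fun ω hω => ?_⟩
  have h₁ : P1 (w ω) = P1 (w (ofIdem (P1 ω) b₀)) := by
    simpa [ofIdem_P1_P2] using hcD₂.isPreconnected.apply_eq_of_fstApproxAt
      (fun b hb => fstApproxAt_P1 hD₁ hFG hω.1 hb (hwD _ hω.1 b hb)) hω.2 hb₀
  have h₂ : P2 (w ω) = P2 (w (ofIdem a₀ (P2 ω))) := by
    simpa [ofIdem_P1_P2] using hcD₁.isPreconnected.apply_eq_of_fstApproxAt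
      (fun a ha => fstApproxAt_P2 hD₂ hFG ha hω.2 (hwD a ha _ hω.2)) hω.1 ha₀
  simp only [← h₁, ← h₂]
  exact (ofIdem_P1_P2 (w ω)).symm
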